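/- Let X be a nondegenerate chainable continuum. Then T_{X²}(Δ_X) = Δ_X if and only if X is an arc (i.e., X is homeomorphic to [0,1]). -/

import Mathlib

open Set Metric

/-- A subcontinuum of a space `Z`: a nonempty compact connected subset. -/
def IsSubcontinuum {Z : Type*} [TopologicalSpace Z] (S : Set Z) : Prop :=
  IsCompact S ∧ IsConnected S

/-- `X` is chainable. -/
def IsChainable (X : Type*) [MetricSpace X] : Prop :=
  ∀ ε : ℝ, 0 < ε → ∃ n : ℕ, ∃ U : Fin (n + 1) → Set X,
    (∀ j, IsOpen (U j)) ∧ (⋃ j, U j) = Set.univ ∧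
    (∀ j, Metric.diam (U j) < ε) ∧
    ∀ j k, (U j ∩ U k).Nonempty ↔ |((j : ℕ) : ℤ) - ((k : ℕ) : ℤ)| ≤ 1

/-- Jones's set function `T`. -/
def jonesT {Z : Type*} [TopologicalSpace Z] (A : Set Z) : Set Z :=
  {x | ∃ W : Set Z, IsSubcontinuum W ∧ x ∈ interior W ∧ W ⊆ Aᶜ}ᶜ

/-!
If `T(Δ) = Δ`, every point off the diagonal has a subcontinuum neighbourhood missing `Δ`, so the
relation "lie in a common subcontinuum missing `Δ`" has open classes, and every connected subset of
`X² \ Δ` lies in a single class. Chainability yields, for every `δ > 0`, a map `f : X → ℝ` sending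
`δ`-distant points more than `1` apart; on a subcontinuum missing `Δ` the sign of `f x - f y` is
then constant. Hence `(x, y)` is never linked to `(y, x)`, and no three points `a, b, c` have
`(a, b) ~ (a, c)`, `(b, a) ~ (b, c)` and `(c, a) ~ (c, b)`. If no point cuts `X`, the connected sets
`{z} × (X \ {z})` would produce such a triple, so `X` has a cut point `x₀`. Using separations of
`X \ {u}`, every off-diagonal pair is linked to `(x₀, b₀)` or to `(b₀, x₀)`, and
`u < v :↔ (u, v) ~ (x₀, b₀)` is a linear order with open rays. A compact, connected, separable
linearly ordered space with two points is order-isomorphic to `[0, 1]`.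

Conversely, in `[0, 1]` a pair `s < t` is interior to `[0, c] × [c', 1]` for `s < c < c' < t`.
-/

open Filter Topology

section CompactOrder

theorem OrderTopology.of_isOpen_Ioi_Iio {Y : Type*} [t : TopologicalSpace Y] [hc : CompactSpace Y]
    [LinearOrder Y] (hIoi : ∀ a : Y, IsOpen (Ioi a)) (hIio : ∀ a : Y, IsOpen (Iio a)) :
    OrderTopology Y := by
  have hle : t ≤ Preorder.topology Y := by
    refine le_generateFrom ?_
    rintro s ⟨a, rfl | rfl⟩
    exacts [hIoi a, hIio a]
  have hT2 : @T2Space Y (Preorder.topology Y) := by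
    let := Preorder.topology Y
    have : OrderTopology Y := ⟨rfl⟩
    infer_instance
  -- the identity from the compact topology `t` to the Hausdorff order topology is a homeomorphism
  have hsymm := @Continuous.continuous_symm_of_equiv_compact_to_t2 Y Y t (Preorder.topology Y)
    hc hT2 (Equiv.refl Y) (continuous_id_iff_le.mpr hle)
  exact ⟨le_antisymm hle (continuous_id_iff_le.mp hsymm)⟩

def ratIooToIcc (q : Ioo (0 : ℚ) 1) : Icc (0 : ℝ) 1 :=
  ⟨q, Ioo_subset_Icc_self ⟨by exact_mod_cast q.2.1, by exact_mod_cast q.2.2⟩⟩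

theorem strictMono_ratIooToIcc : StrictMono ratIooToIcc := fun _ _ h =>
  Subtype.coe_lt_coe.mp (Rat.cast_lt.mpr h)

theorem denseRange_ratIooToIcc : DenseRange ratIooToIcc := by
  refine dense_iff_exists_between.mpr fun a b hab => ?_
  obtain ⟨q, haq, hqb⟩ := exists_rat_btwn (Subtype.coe_lt_coe.mpr hab)
  have hq : q ∈ Ioo (0 : ℚ) 1 :=
    ⟨by exact_mod_cast a.2.1.trans_lt haq, by exact_mod_cast hqb.trans_le b.2.2⟩
  exact ⟨_, ⟨⟨q, hq⟩, rfl⟩, haq, hqb⟩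

theorem nonempty_orderIso_of_denseRange {Y Z : Type*} [LinearOrder Y] [TopologicalSpace Y]
    [OrderTopology Y] [CompactSpace Y] [CompleteLinearOrder Z] [TopologicalSpace Z]
    [OrderTopology Z] [DenselyOrdered Z] {D : Set Y}
    (hD : ∀ a b, a < b → ∃ d ∈ D, a < d ∧ d < b) {g : D → Z} (hg : StrictMono g)
    (hgd : DenseRange g) : Nonempty (Y ≃o Z) := by
  let F : Y → Z := fun y => ⨆ d : {d : D // (d : Y) ≤ y}, g d
  have hFle : ∀ (y : Y) (d : D), y < d → F y ≤ g d := fun y d hyd =>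
    iSup_le fun d' => hg.monotone (Subtype.coe_le_coe.mp (d'.2.trans hyd.le))
  have hleF : ∀ (y : Y) (d : D), (d : Y) ≤ y → g d ≤ F y := fun y d hdy =>
    le_iSup (fun d' : {d : D // (d : Y) ≤ y} => g d') ⟨d, hdy⟩
  have hFmono : StrictMono F := by
    intro y₁ y₂ hy
    obtain ⟨d₁, hd₁, hyd₁, hd₁₂⟩ := hD y₁ y₂ hy
    obtain ⟨d₂, hd₂, hd₁d₂, hyd₂⟩ := hD d₁ y₂ hd₁₂
    calc F y₁ ≤ g ⟨d₁, hd₁⟩ := hFle y₁ ⟨d₁, hd₁⟩ hyd₁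
      _ < g ⟨d₂, hd₂⟩ := hg hd₁d₂
      _ ≤ F y₂ := hleF y₂ ⟨d₂, hd₂⟩ hyd₂.le
  have hrange : range g ⊆ range F := by
    rintro _ ⟨d, rfl⟩
    exact ⟨d, le_antisymm (iSup_le fun d' => hg.monotone d'.2) (hleF d d le_rfl)⟩
  have hFdense : DenseRange F := hgd.mono hrange
  have hFcont : Continuous F := hFmono.monotone.continuous_of_denseRange hFdense
  have hFsurj : Function.Surjective F := by
    rw [← range_eq_univ, ← hFdense.closure_eq, (isCompact_range hFcont).isClosed.closure_eq]
  exact ⟨hFmono.orderIsoOfSurjective F hFsurj⟩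

theorem exists_countable_orderDense {Y : Type*} [LinearOrder Y] [TopologicalSpace Y]
    [OrderTopology Y] [CompactSpace Y] [DenselyOrdered Y] [TopologicalSpace.SeparableSpace Y]
    [Nontrivial Y] :
    ∃ D : Set Y, D.Countable ∧ D.Nonempty ∧ (∀ a b, a < b → ∃ d ∈ D, a < d ∧ d < b) ∧
      ∀ d ∈ D, ∃ d₁ ∈ D, ∃ d₂ ∈ D, d₁ < d ∧ d < d₂ := by
  obtain ⟨D₀, hD₀c, hD₀d⟩ := TopologicalSpace.exists_countable_dense Y
  obtain ⟨m, hm⟩ := (isCompact_univ (X := Y)).exists_isLeast univ_nonempty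
  obtain ⟨M, hM⟩ := (isCompact_univ (X := Y)).exists_isGreatest univ_nonempty
  have hbetween : ∀ a b, a < b → ∃ d ∈ D₀ ∩ Ioo m M, a < d ∧ d < b := by
    intro a b hab
    obtain ⟨d, hd, had, hdb⟩ := dense_iff_exists_between.mp hD₀d a b hab
    exact ⟨d, ⟨hd, (hm.2 (mem_univ a)).trans_lt had, hdb.trans_le (hM.2 (mem_univ b))⟩, had, hdb⟩
  obtain ⟨a, b, hab⟩ := exists_pair_ne Y
  have hmM : m < M := lt_of_le_of_ne (hm.2 (mem_univ M)) fun h =>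
    hab (le_antisymm ((hM.2 (mem_univ a)).trans (h ▸ hm.2 (mem_univ b)))
      ((hM.2 (mem_univ b)).trans (h ▸ hm.2 (mem_univ a))))
  refine ⟨D₀ ∩ Ioo m M, hD₀c.mono inter_subset_left, ?_, hbetween, fun d hd => ?_⟩
  · obtain ⟨d, hd, -⟩ := hbetween m M hmM
    exact ⟨d, hd⟩
  · obtain ⟨d₁, hd₁, -, h₁⟩ := hbetween m d hd.2.1
    obtain ⟨d₂, hd₂, h₂, -⟩ := hbetween d M hd.2.2
    exact ⟨d₁, hd₁, d₂, hd₂, h₁, h₂⟩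

theorem nonempty_orderIso_Icc {Y : Type*} [LinearOrder Y] [TopologicalSpace Y]
    [OrderTopology Y] [CompactSpace Y] [DenselyOrdered Y] [TopologicalSpace.SeparableSpace Y]
    [Nontrivial Y] : Nonempty (Y ≃o Icc (0 : ℝ) 1) := by
  obtain ⟨D, hDc, hDne, hD, hDunb⟩ := exists_countable_orderDense (Y := Y)
  have : Countable D := hDc.to_subtype
  have : Nonempty D := hDne.to_subtype
  have : DenselyOrdered D := ⟨fun a b hab => by
    obtain ⟨d, hd, had, hdb⟩ := hD a b hab
    exact ⟨⟨d, hd⟩, had, hdb⟩⟩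
  have : NoMinOrder D := ⟨fun a => by
    obtain ⟨d, hd, -, -, h, -⟩ := hDunb a a.2
    exact ⟨⟨d, hd⟩, h⟩⟩
  have : NoMaxOrder D := ⟨fun a => by
    obtain ⟨-, -, d, hd, -, h⟩ := hDunb a a.2
    exact ⟨⟨d, hd⟩, h⟩⟩
  have : Nonempty (Ioo (0 : ℚ) 1) := nonempty_Ioo_subtype one_pos
  obtain ⟨ψ⟩ := Order.iso_of_countable_dense D (Ioo (0 : ℚ) 1)
  refine nonempty_orderIso_of_denseRange hD (strictMono_ratIooToIcc.comp ψ.strictMono) ?_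
  rw [DenseRange, range_comp, ψ.range_eq, image_univ]
  exact denseRange_ratIooToIcc

end CompactOrder

section Linked

variable {Z : Type*} [TopologicalSpace Z] {A : Set Z} {p q r : Z}

theorem notMem_jonesT_iff :
    p ∉ jonesT A ↔ ∃ W, IsSubcontinuum W ∧ p ∈ interior W ∧ W ⊆ Aᶜ := by
  simp [jonesT]

theorem subset_jonesT (A : Set Z) : A ⊆ jonesT A := by
  rintro p hp ⟨W, -, hpW, hWA⟩
  exact hWA (interior_subset hpW) hp

theorem jonesT_eq_self_iff : jonesT A = A ↔ jonesT A ⊆ A :=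
  ⟨Eq.subset, fun h => h.antisymm (subset_jonesT A)⟩

theorem Homeomorph.jonesT_preimage_subset {Z' : Type*} [TopologicalSpace Z'] (e : Z ≃ₜ Z')
    (B : Set Z') : jonesT (e ⁻¹' B) ⊆ e ⁻¹' jonesT B := by
  rintro p hp ⟨W, ⟨hWc, hWconn⟩, hpW, hWB⟩
  refine hp ⟨e ⁻¹' W, ⟨e.isCompact_preimage.mpr hWc, ?_⟩, ?_, fun x hx => hWB hx⟩
  · rw [← e.image_symm]; exact hWconn.image _ e.symm.continuous.continuousOn
  · rwa [← e.preimage_interior]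

def Linked (A : Set Z) (p q : Z) : Prop :=
  ∃ C, IsSubcontinuum C ∧ C ⊆ Aᶜ ∧ p ∈ C ∧ q ∈ C

theorem Linked.notMem_left (h : Linked A p q) : p ∉ A :=
  have ⟨_, _, hCA, hp, _⟩ := h; hCA hp

theorem Linked.symm (h : Linked A p q) : Linked A q p :=
  have ⟨C, hC, hCA, hp, hq⟩ := h; ⟨C, hC, hCA, hq, hp⟩

theorem Linked.trans (h : Linked A p q) (h' : Linked A q r) : Linked A p r := by
  obtain ⟨C, ⟨hCc, hCconn⟩, hCA, hp, hq⟩ := h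
  obtain ⟨C', ⟨hC'c, hC'conn⟩, hC'A, hq', hr⟩ := h'
  exact ⟨C ∪ C', ⟨hCc.union hC'c, hCconn.union ⟨q, hq, hq'⟩ hC'conn⟩, union_subset hCA hC'A,
    Or.inl hp, Or.inr hr⟩

theorem Linked.image {Z' : Type*} [TopologicalSpace Z'] {B : Set Z'} {f : Z → Z'}
    (hf : Continuous f) (hfA : MapsTo f Aᶜ Bᶜ) (h : Linked A p q) : Linked B (f p) (f q) := by
  obtain ⟨C, ⟨hCc, hCconn⟩, hCA, hp, hq⟩ := h
  exact ⟨f '' C, ⟨hCc.image hf, hCconn.image f hf.continuousOn⟩,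
    (hfA.mono_left hCA).image_subset, mem_image_of_mem f hp, mem_image_of_mem f hq⟩

theorem eventually_linked (hT : jonesT A ⊆ A) (hp : p ∉ A) : ∀ᶠ q in 𝓝 p, Linked A p q := by
  obtain ⟨W, hW, hpW, hWA⟩ := notMem_jonesT_iff.mp fun h => hp (hT h)
  filter_upwards [mem_interior_iff_mem_nhds.mp hpW] with q hq
  exact ⟨W, hW, hWA, interior_subset hpW, hq⟩

theorem isOpen_setOf_linked (hT : jonesT A ⊆ A) (q : Z) : IsOpen {p | Linked A p q} :=
  isOpen_iff_mem_nhds.mpr fun _ hpq =>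
    (eventually_linked hT hpq.notMem_left).mono fun _ hp' => hp'.symm.trans hpq

theorem IsPreconnected.linked (hT : jonesT A ⊆ A) {S : Set Z} (hS : IsPreconnected S)
    (hSA : S ⊆ Aᶜ) (hp : p ∈ S) (hq : q ∈ S) : Linked A p q :=
  hS.induction₂ (Linked A)
    (fun _ hx => mem_nhdsWithin_of_mem_nhds (eventually_linked hT (hSA hx)))
    (fun _ _ _ _ _ _ => Linked.trans) (fun _ _ _ _ => Linked.symm) hp hq

end Linked

section PartitionOfUnity

variable {X : Type*} [TopologicalSpace X] [NormalSpace X] [ParacompactSpace X]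

theorem exists_continuous_abs_sub_le_one_of_chain {n : ℕ} {U : Fin (n + 1) → Set X}
    (hU : ∀ j, IsOpen (U j)) (hcover : ⋃ j, U j = univ)
    (hlink : ∀ j k : Fin (n + 1), (U j ∩ U k).Nonempty → |((j : ℕ) : ℤ) - ((k : ℕ) : ℤ)| ≤ 1) :
    ∃ f : X → ℝ, Continuous f ∧ ∀ k x, x ∈ U k → |f x - (k : ℕ)| ≤ 1 := by
  obtain ⟨ρ, hρ⟩ := PartitionOfUnity.exists_isSubordinate isClosed_univ U hU hcover.ge
  refine ⟨fun x => ∑ j : Fin (n + 1), ((j : ℕ) : ℝ) * ρ j x,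
    continuous_finsetSum _ fun j _ => continuous_const.mul (ρ j).continuous, fun k x hx => ?_⟩
  have hsum : ∑ j, ρ j x = 1 := by
    rw [← finsum_eq_sum_of_fintype]; exact ρ.sum_eq_one (mem_univ x)
  have hterm : ∀ j : Fin (n + 1), |(((j : ℕ) : ℝ) - (k : ℕ)) * ρ j x| ≤ ρ j x := by
    intro j
    rw [abs_mul, abs_of_nonneg (ρ.nonneg j x)]
    by_cases hρx : ρ j x = 0
    · simp [hρx]
    · have hxj : x ∈ U j := hρ j (subset_tsupport _ hρx)
      exact mul_le_of_le_one_left (ρ.nonneg j x) (by exact_mod_cast hlink j k ⟨x, hxj, hx⟩)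
  calc |∑ j : Fin (n + 1), ((j : ℕ) : ℝ) * ρ j x - (k : ℕ)|
      = |∑ j : Fin (n + 1), (((j : ℕ) : ℝ) - (k : ℕ)) * ρ j x| := by
        simp only [sub_mul, Finset.sum_sub_distrib, ← Finset.mul_sum, hsum, mul_one]
    _ ≤ ∑ j : Fin (n + 1), |(((j : ℕ) : ℝ) - (k : ℕ)) * ρ j x| := Finset.abs_sum_le_sum_abs _ _
    _ ≤ ∑ j, ρ j x := Finset.sum_le_sum fun j _ => hterm j
    _ = 1 := hsum

end PartitionOfUnity

section Chainable

variable {X : Type*} [MetricSpace X]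

theorem dist_lt_of_chain {n : ℕ} {U : Fin (n + 1) → Set X} {ε : ℝ}
    (hbdd : ∀ j, Bornology.IsBounded (U j)) (hdiam : ∀ j, diam (U j) < ε)
    (hlink : ∀ j k : Fin (n + 1), |((j : ℕ) : ℤ) - ((k : ℕ) : ℤ)| ≤ 1 → (U j ∩ U k).Nonempty)
    (d : ℕ) {j k : Fin (n + 1)} (hjk : (k : ℕ) = j + d) {x y : X} (hx : x ∈ U j) (hy : y ∈ U k) :
    dist x y < (d + 1) * ε := by
  induction d generalizing k y with
  | zero =>
    obtain rfl : k = j := Fin.ext hjk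
    simpa using (dist_le_diam_of_mem (hbdd k) hx hy).trans_lt (hdiam k)
  | succ d ih =>
    let k' : Fin (n + 1) := ⟨j + d, by omega⟩
    obtain ⟨z, hzk', hzk⟩ := hlink k' k (by simp [k', hjk])
    have hxz := ih rfl hzk'
    have hzy := (dist_le_diam_of_mem (hbdd k) hzk hy).trans_lt (hdiam k)
    calc dist x y ≤ dist x z + dist z y := dist_triangle x z y
      _ < (d + 1) * ε + ε := add_lt_add hxz hzy
      _ = ((d + 1 : ℕ) + 1) * ε := by push_cast; ring

def SeparatesAtScale (δ : ℝ) (f : X → ℝ) : Prop :=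
  Continuous f ∧ ∀ x y, δ ≤ dist x y → 1 < |f x - f y|

theorem IsChainable.exists_separatesAtScale [CompactSpace X] (hch : IsChainable X) {δ : ℝ}
    (hδ : 0 < δ) : ∃ f : X → ℝ, SeparatesAtScale δ f := by
  obtain ⟨n, U, hU, hcover, hdiam, hlink⟩ := hch (δ / 4) (by positivity)
  obtain ⟨f, hf, hfU⟩ :=
    exists_continuous_abs_sub_le_one_of_chain hU hcover fun j k => (hlink j k).mp
  have hbdd : ∀ j, Bornology.IsBounded (U j) := fun _ => isBounded_of_compactSpace
  have hmem : ∀ x, ∃ j, x ∈ U j := fun x => mem_iUnion.mp (hcover ▸ mem_univ x)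
  -- points whose images are `1`-close lie in links at most three apart, hence are `δ`-close
  have hclose : ∀ x y j k, x ∈ U j → y ∈ U k → (j : ℕ) ≤ k → |f x - f y| ≤ 1 →
      dist x y < δ := by
    intro x y j k hx hy hjk hxy
    have h3 : ((k : ℕ) : ℝ) - (j : ℕ) ≤ 3 := by
      have := hfU j x hx; have := hfU k y hy
      rw [abs_le] at *; linarith
    have hd : ((k - j : ℕ) : ℝ) ≤ 3 := by push_cast [hjk]; exact h3
    calc dist x y < ((k - j : ℕ) + 1) * (δ / 4) :=
          dist_lt_of_chain hbdd hdiam (fun j k h => (hlink j k).mpr h) (k - j) (by omega) hx hy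
      _ ≤ δ := by nlinarith
  refine ⟨f, hf, fun x y hxy => not_le.mp fun h => ?_⟩
  obtain ⟨j, hx⟩ := hmem x
  obtain ⟨k, hy⟩ := hmem y
  rcases le_total (j : ℕ) k with hjk | hkj
  · exact (hclose x y j k hx hy hjk h).not_ge hxy
  · exact (hclose y x k j hy hx hkj (abs_sub_comm (f x) (f y) ▸ h)).not_ge (dist_comm x y ▸ hxy)

end Chainable

section SameSide

variable {X : Type*} [MetricSpace X] {p q : X × X}

def SameSide (f : X → ℝ) (p q : X × X) : Prop :=
  (1 < f p.1 - f p.2 ∧ 1 < f q.1 - f q.2) ∨ (f p.1 - f p.2 < -1 ∧ f q.1 - f q.2 < -1)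

theorem Linked.eventually_sameSide (h : Linked (diagonal X) p q) :
    ∀ᶠ δ in 𝓝[>] 0, ∀ f, SeparatesAtScale δ f → SameSide f p q := by
  obtain ⟨C, ⟨hCc, hCconn⟩, hCA, hp, hq⟩ := h
  obtain ⟨r, hr, hrmin⟩ := hCc.exists_isMinOn hCconn.nonempty continuous_dist.continuousOn
  filter_upwards [Ioc_mem_nhdsGT (dist_pos.mpr (hCA hr))] with δ hδ f ⟨hf, hsep⟩
  let g : X × X → ℝ := fun s => f s.1 - f s.2
  have hgC : ∀ s ∈ C, 1 < |g s| := fun s hs => hsep _ _ (hδ.2.trans (hrmin hs))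
  have hg : ContinuousOn g C :=
    ((hf.comp continuous_fst).sub (hf.comp continuous_snd)).continuousOn
  have hnot : ∀ s ∈ C, ∀ t ∈ C, 1 < g s → g t < -1 → False := by
    intro s hs t ht hgs hgt
    obtain ⟨u, hu, hgu⟩ :=
      hCconn.isPreconnected.intermediate_value ht hs hg
        (show (0 : ℝ) ∈ Icc (g t) (g s) from ⟨by linarith, by linarith⟩)
    have := hgC u hu
    rw [hgu, abs_zero] at this
    linarith
  rcases lt_abs.mp (hgC p hp) with hgp | hgp <;> rcases lt_abs.mp (hgC q hq) with hgq | hgq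
  · exact Or.inl ⟨hgp, hgq⟩
  · exact (hnot p hp q hq hgp (by linarith)).elim
  · exact (hnot q hq p hp hgq (by linarith)).elim
  · exact Or.inr ⟨by linarith, by linarith⟩

variable [CompactSpace X] (hch : IsChainable X)
include hch

theorem IsChainable.not_linked_swap {x y : X} : ¬ Linked (diagonal X) (x, y) (y, x) := by
  intro h
  obtain ⟨δ, hside, hδ⟩ := (h.eventually_sameSide.and self_mem_nhdsWithin).exists
  obtain ⟨f, hf⟩ := hch.exists_separatesAtScale hδ
  rcases hside f hf with ⟨h₁, h₂⟩ | ⟨h₁, h₂⟩ <;> dsimp only at h₁ h₂ <;> linarith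

theorem IsChainable.not_linked_cycle {x y z : X} (h : Linked (diagonal X) (x, y) (y, z))
    (h' : Linked (diagonal X) (y, z) (z, x)) : False := by
  obtain ⟨δ, ⟨hside, hside'⟩, hδ⟩ :=
    ((h.eventually_sameSide.and h'.eventually_sameSide).and self_mem_nhdsWithin).exists
  obtain ⟨f, hf⟩ := hch.exists_separatesAtScale hδ
  rcases hside f hf with ⟨h₁, h₂⟩ | ⟨h₁, h₂⟩ <;> rcases hside' f hf with ⟨h₃, h₄⟩ | ⟨h₃, h₄⟩ <;>
    dsimp only at h₁ h₂ h₃ h₄ <;> linarith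

theorem IsChainable.not_linked_tri {a b c : X} (ha : Linked (diagonal X) (a, b) (a, c))
    (hb : Linked (diagonal X) (b, a) (b, c)) (hc : Linked (diagonal X) (c, a) (c, b)) : False := by
  obtain ⟨δ, ⟨hsa, hsb, hsc⟩, hδ⟩ := ((ha.eventually_sameSide.and
    (hb.eventually_sameSide.and hc.eventually_sameSide)).and self_mem_nhdsWithin).exists
  obtain ⟨f, hf⟩ := hch.exists_separatesAtScale hδ
  rcases hsa f hf with ⟨h₁, h₂⟩ | ⟨h₁, h₂⟩ <;> rcases hsb f hf with ⟨h₃, h₄⟩ | ⟨h₃, h₄⟩ <;>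
    rcases hsc f hf with ⟨h₅, h₆⟩ | ⟨h₅, h₆⟩ <;> dsimp only at h₁ h₂ h₃ h₄ h₅ h₆ <;> linarith

end SameSide

section CutPoint

variable {X : Type*} [TopologicalSpace X]

structure IsCutSeparation (x : X) (A B : Set X) : Prop where
  isOpen_left : IsOpen A
  isOpen_right : IsOpen B
  disjoint : Disjoint A B
  union_eq : A ∪ B = {x}ᶜ
  nonempty_left : A.Nonempty
  nonempty_right : B.Nonempty

theorem exists_isCutSeparation_of_not_isPreconnected [T1Space X] {x : X}
    (h : ¬ IsPreconnected ({x}ᶜ : Set X)) : ∃ A B, IsCutSeparation x A B := by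
  simp only [IsPreconnected, not_forall, not_nonempty_iff_eq_empty] at h
  obtain ⟨u, v, hu, hv, hcover, hu', hv', huv⟩ := h
  refine ⟨{x}ᶜ ∩ u, {x}ᶜ ∩ v, ⟨isOpen_compl_singleton.inter hu, isOpen_compl_singleton.inter hv,
    ?_, ?_, hu', hv'⟩⟩
  · rw [disjoint_iff_inter_eq_empty, ← huv]; ext; simp only [mem_inter_iff]; tauto
  · rw [← inter_union_distrib_left, inter_eq_left.mpr hcover]

namespace IsCutSeparation

variable {x : X} {A B : Set X} (S : IsCutSeparation x A B)
include S

theorem symm : IsCutSeparation x B A :=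
  ⟨S.isOpen_right, S.isOpen_left, S.disjoint.symm, union_comm A B ▸ S.union_eq,
    S.nonempty_right, S.nonempty_left⟩

theorem mem_or_mem {y : X} (hy : y ≠ x) : y ∈ A ∨ y ∈ B :=
  (S.union_eq ▸ hy : y ∈ A ∪ B)

theorem notMem_left : x ∉ A := fun hx =>
  (S.union_eq ▸ mem_union_left B hx : x ∈ ({x}ᶜ : Set X)) rfl

theorem notMem_insert_right {a : X} (ha : a ∈ A) : a ∉ insert x B := by
  rintro (rfl | hb)
  exacts [S.notMem_left ha, S.disjoint.notMem_of_mem_left ha hb]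

theorem compl_right : Bᶜ = insert x A := by
  ext y
  by_cases hy : y = x
  · subst hy; simp [S.symm.notMem_left]
  · rcases S.mem_or_mem hy with hA | hB
    · simp [hA, S.disjoint.notMem_of_mem_left hA]
    · simp [hB, hy, S.disjoint.notMem_of_mem_right hB]

theorem isPreconnected_insert_left [PreconnectedSpace X] : IsPreconnected (insert x A) := by
  -- the part of a splitting of `insert x A = Bᶜ` missing `x` is open in `X`, hence clopen, so empty
  have key : ∀ u v : Set X, IsClosed u → IsClosed v → insert x A ⊆ u ∪ v → Disjoint u v →
      x ∈ u → insert x A ⊆ u := by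
    intro u v hu hv hcover huv hxu
    have heq : A ∩ uᶜ = insert x A ∩ v := by
      ext y
      constructor
      · rintro ⟨hyA, hyu⟩
        exact ⟨Or.inr hyA, (hcover (Or.inr hyA)).resolve_left hyu⟩
      · rintro ⟨rfl | hyA, hyv⟩
        · exact (huv.notMem_of_mem_left hxu hyv).elim
        · exact ⟨hyA, huv.notMem_of_mem_right hyv⟩
    have hclopen : IsClopen (A ∩ uᶜ) :=
      ⟨heq ▸ (S.compl_right ▸ S.isOpen_right.isClosed_compl).inter hv,
        S.isOpen_left.inter hu.isOpen_compl⟩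
    have hempty : A ∩ uᶜ = ∅ := (isClopen_iff.mp hclopen).resolve_right fun h =>
      S.notMem_left (h ▸ mem_univ x : x ∈ A ∩ uᶜ).1
    rintro y (rfl | hyA)
    · exact hxu
    · by_contra hyu
      exact (hempty ▸ ⟨hyA, hyu⟩ : y ∈ (∅ : Set X))
  rw [isPreconnected_iff_subset_of_fully_disjoint_closed
    (S.compl_right ▸ S.isOpen_right.isClosed_compl)]
  intro u v hu hv hcover huv
  rcases hcover (mem_insert x A) with hxu | hxv
  · exact Or.inl (key u v hu hv hcover huv hxu)
  · exact Or.inr (key v u hv hu (union_comm u v ▸ hcover) huv.symm hxv)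

end IsCutSeparation

end CutPoint

section Diagonal

variable {X : Type*} [TopologicalSpace X] {p q : X × X}

theorem Linked.swap (h : Linked (diagonal X) p q) : Linked (diagonal X) p.swap q.swap :=
  h.image continuous_swap fun _ hr hr' => hr (mem_diagonal_iff.mpr (mem_diagonal_iff.mp hr').symm)

variable (hT : jonesT (diagonal X) ⊆ diagonal X)
include hT

theorem linked_of_isPreconnected_snd {C : Set X} (hC : IsPreconnected C) {z w w' : X}
    (hz : z ∉ C) (hw : w ∈ C) (hw' : w' ∈ C) : Linked (diagonal X) (z, w) (z, w') :=
  (isPreconnected_singleton.prod hC).linked hT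
    (by rintro ⟨a, b⟩ ⟨rfl, hb⟩ (hab : a = b); exact hz (hab ▸ hb)) ⟨rfl, hw⟩ ⟨rfl, hw'⟩

theorem linked_of_isPreconnected_fst {C : Set X} (hC : IsPreconnected C) {z w w' : X}
    (hz : z ∉ C) (hw : w ∈ C) (hw' : w' ∈ C) : Linked (diagonal X) (w, z) (w', z) :=
  (linked_of_isPreconnected_snd hT hC hz hw hw').swap

theorem IsCutSeparation.linked [PreconnectedSpace X] {x a b : X} {A B : Set X}
    (S : IsCutSeparation x A B) (ha : a ∈ A) (hb : b ∈ B) :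
    Linked (diagonal X) (a, x) (x, b) :=
  (linked_of_isPreconnected_snd hT S.symm.isPreconnected_insert_left
      (S.notMem_insert_right ha) (mem_insert x B) (mem_insert_of_mem x hb)).trans
    (linked_of_isPreconnected_fst hT S.isPreconnected_insert_left
      (S.symm.notMem_insert_right hb) (mem_insert_of_mem x ha) (mem_insert x A))

end Diagonal

section Orientation

variable {X : Type*} [TopologicalSpace X] {P₀ p q : X × X}

def IsOriented (P₀ p : X × X) : Prop :=
  Linked (diagonal X) p P₀ ∨ Linked (diagonal X) p.swap P₀

theorem IsOriented.swap (h : IsOriented P₀ p) : IsOriented P₀ p.swap := h.symm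

theorem IsOriented.of_linked (h : Linked (diagonal X) p q) (hq : IsOriented P₀ q) :
    IsOriented P₀ p :=
  hq.imp h.trans h.swap.trans

variable [PreconnectedSpace X] (hT : jonesT (diagonal X) ⊆ diagonal X)
include hT

theorem IsCutSeparation.isOriented_to_cutPoint {x₀ b₀ : X} {A₀ B₀ : Set X}
    (S : IsCutSeparation x₀ A₀ B₀) (hb₀ : b₀ ∈ B₀) {u : X} (hu : u ≠ x₀) :
    IsOriented (x₀, b₀) (u, x₀) := by
  rcases S.mem_or_mem hu with hu | hu
  · exact Or.inl (S.linked hT hu hb₀)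
  · obtain ⟨a₀, ha₀⟩ := S.nonempty_left
    exact Or.inr ((S.symm.linked hT hu ha₀).trans (S.symm.linked hT hb₀ ha₀).symm).swap

theorem IsCutSeparation.isOriented_of_mem_left {u v x₀ : X} {A B : Set X}
    (S : IsCutSeparation u A B) (hv : v ∈ A) (hx₀ : x₀ ≠ u) (hvx₀ : v ≠ x₀)
    (horient : ∀ w ≠ x₀, IsOriented P₀ (w, x₀)) : IsOriented P₀ (u, v) := by
  have hu : IsPreconnected (insert u B) := S.symm.isPreconnected_insert_left
  have hv' : v ∉ insert u B := S.notMem_insert_right hv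
  refine IsOriented.swap (?_ : IsOriented P₀ (v, u))
  rcases S.mem_or_mem hx₀ with hx₀A | hx₀B
  · obtain ⟨b, hb⟩ := S.nonempty_right
    have h₁ := linked_of_isPreconnected_snd hT hu hv' (mem_insert u B) (mem_insert_of_mem u hb)
    have h₂ := linked_of_isPreconnected_fst hT S.isPreconnected_insert_left
      (S.symm.notMem_insert_right hb) (mem_insert_of_mem u hv) (mem_insert_of_mem u hx₀A)
    have h₃ := linked_of_isPreconnected_snd hT hu (S.notMem_insert_right hx₀A)
      (mem_insert_of_mem u hb) (mem_insert u B)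
    exact IsOriented.of_linked (h₁.trans (h₂.trans h₃)) (horient u hx₀.symm).swap
  · exact IsOriented.of_linked
      (linked_of_isPreconnected_snd hT hu hv' (mem_insert u B) (mem_insert_of_mem u hx₀B))
      (horient v hvx₀)

end Orientation

section Totality

variable {X : Type*} [TopologicalSpace X] [PreconnectedSpace X] [T1Space X] {P₀ : X × X}

theorem isOriented_of_ne (hT : jonesT (diagonal X) ⊆ diagonal X) {x₀ : X}
    (horient : ∀ w ≠ x₀, IsOriented P₀ (w, x₀)) {u v : X} (huv : u ≠ v) :
    IsOriented P₀ (u, v) := by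
  by_cases hv : v = x₀
  · subst hv; exact horient u huv
  by_cases hu : u = x₀
  · subst hu; exact (horient v (Ne.symm huv)).swap
  by_cases hpre : IsPreconnected ({u}ᶜ : Set X)
  · exact IsOriented.of_linked (linked_of_isPreconnected_snd hT hpre (fun h => h rfl)
      (Ne.symm huv) (Ne.symm hu)) (horient u hu)
  obtain ⟨A, B, S⟩ := exists_isCutSeparation_of_not_isPreconnected hpre
  rcases S.mem_or_mem (Ne.symm huv) with hvA | hvB
  · exact S.isOriented_of_mem_left hT hvA (Ne.symm hu) hv horient
  · exact S.symm.isOriented_of_mem_left hT hvB (Ne.symm hu) hv horient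

end Totality

section Arc

variable {X : Type*} [MetricSpace X] [CompactSpace X] (hch : IsChainable X)
include hch

theorem IsChainable.exists_isCutSeparation [ConnectedSpace X] [Nontrivial X]
    (hT : jonesT (diagonal X) ⊆ diagonal X) : ∃ x : X, ∃ A B, IsCutSeparation x A B := by
  classical
  by_contra! hcut
  have hpre (z : X) : IsPreconnected ({z}ᶜ : Set X) := by
    by_contra hz
    obtain ⟨A, B, S⟩ := exists_isCutSeparation_of_not_isPreconnected hz
    exact hcut z A B S
  have hlinked (z w w' : X) (hw : w ≠ z) (hw' : w' ≠ z) :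
      Linked (diagonal X) (z, w) (z, w') :=
    linked_of_isPreconnected_snd hT (hpre z) (fun h => h rfl) hw hw'
  have : Infinite X := PreconnectedSpace.infinite
  obtain ⟨a, b, hab⟩ := exists_pair_ne X
  obtain ⟨c, hc⟩ := Infinite.exists_notMem_finset ({a, b} : Finset X)
  have hca : c ≠ a := fun h => hc (by simp [h])
  have hcb : c ≠ b := fun h => hc (by simp [h])
  exact hch.not_linked_tri (hlinked a b c (Ne.symm hab) hca) (hlinked b a c hab hcb)
    (hlinked c a b (Ne.symm hca) (Ne.symm hcb))

theorem IsChainable.isStrictTotalOrder_linked {P₀ : X × X}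
    (htotal : ∀ u v : X, u ≠ v → IsOriented P₀ (u, v)) :
    IsStrictTotalOrder X (fun u v => Linked (diagonal X) (u, v) P₀) where
  irrefl u h := h.notMem_left (mem_diagonal u)
  trans u v w huv hvw := by
    have huw : u ≠ w := by
      rintro rfl
      exact hch.not_linked_swap (huv.trans hvw.symm)
    exact (htotal u w huw).resolve_right fun hwu =>
      hch.not_linked_cycle (huv.trans hvw.symm) (hvw.trans hwu.symm)
  trichotomous u v huv hvu := by
    by_contra hne
    exact (htotal u v hne).elim huv hvu

theorem IsChainable.nonempty_homeomorph_Icc [ConnectedSpace X] [Nontrivial X]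
    (hT : jonesT (diagonal X) ⊆ diagonal X) : Nonempty (X ≃ₜ Icc (0 : ℝ) 1) := by
  obtain ⟨x₀, A₀, B₀, S⟩ := hch.exists_isCutSeparation hT
  obtain ⟨b₀, hb₀⟩ := S.nonempty_right
  have := hch.isStrictTotalOrder_linked fun u v =>
    isOriented_of_ne hT fun w hw => S.isOriented_to_cutPoint hT hb₀ hw
  classical
  let : LinearOrder X := linearOrderOfSTO fun u v => Linked (diagonal X) (u, v) (x₀, b₀)
  have : OrderTopology X := .of_isOpen_Ioi_Iio
    (fun u => (isOpen_setOf_linked hT (x₀, b₀)).preimage (Continuous.prodMk_right u))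
    (fun u => (isOpen_setOf_linked hT (x₀, b₀)).preimage (Continuous.prodMk_left u))
  have : DenselyOrdered X := denselyOrdered_of_preconnectedSpace
  obtain ⟨e⟩ := nonempty_orderIso_Icc (Y := X)
  exact ⟨e.toHomeomorph⟩

end Arc

section Interval

variable {L : Type*} [ConditionallyCompleteLinearOrder L] [TopologicalSpace L] [OrderTopology L]
  [DenselyOrdered L] [CompactSpace L]

theorem notMem_jonesT_diagonal_of_lt {s t : L} (hst : s < t) : (s, t) ∉ jonesT (diagonal L) := by
  obtain ⟨c, hsc, hct⟩ := exists_between hst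
  obtain ⟨c', hcc', hc't⟩ := exists_between hct
  refine fun hmem => hmem ⟨Iic c ×ˢ Ici c', ⟨(isClosed_Iic.prod isClosed_Ici).isCompact,
    ⟨⟨(c, c'), le_rfl, le_rfl⟩, isPreconnected_Iic.prod isPreconnected_Ici⟩⟩, ?_, ?_⟩
  · exact interior_maximal (Set.prod_mono Iio_subset_Iic_self Ioi_subset_Ici_self)
      (isOpen_Iio.prod isOpen_Ioi) ⟨hsc, hc't⟩
  · rintro ⟨a, b⟩ ⟨ha, hb⟩ (hab : a = b)
    exact (ha.trans_lt hcc').not_ge (hab ▸ hb)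

theorem jonesT_diagonal_subset : jonesT (diagonal L) ⊆ diagonal L := by
  have hswap : Homeomorph.prodComm L L ⁻¹' diagonal L = diagonal L := by
    ext ⟨a, b⟩; exact eq_comm
  rintro ⟨s, t⟩ hst
  rcases lt_trichotomy s t with h | h | h
  · exact (notMem_jonesT_diagonal_of_lt h hst).elim
  · exact h
  · exact (notMem_jonesT_diagonal_of_lt h
      ((Homeomorph.prodComm L L).jonesT_preimage_subset _ (hswap.symm ▸ hst))).elim

theorem Homeomorph.jonesT_diagonal_subset {X : Type*} [TopologicalSpace X] (e : X ≃ₜ L) :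
    jonesT (diagonal X) ⊆ diagonal X := by
  have hdiag : diagonal X = e.prodCongr e ⁻¹' diagonal L := by
    ext ⟨x, y⟩; simp [e.injective.eq_iff]
  rw [hdiag]
  exact ((e.prodCongr e).jonesT_preimage_subset _).trans (preimage_mono _root_.jonesT_diagonal_subset)

end Interval

/-- Let `X` be a nondegenerate chainable continuum. Then `T_{X²}(Δ_X) = Δ_X` iff `X`
is an arc, i.e. `X` is homeomorphic to `[0,1]`. -/
theorem stmt18 {X : Type*} [MetricSpace X] [CompactSpace X] [ConnectedSpace X]
    (hnd : ∃ x y : X, x ≠ y) (hch : IsChainable X) :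
    jonesT {p : X × X | p.1 = p.2} = {p : X × X | p.1 = p.2} ↔
      Nonempty (X ≃ₜ (Set.Icc (0 : ℝ) 1)) := by
  have : Nontrivial X := ⟨hnd⟩
  change jonesT (diagonal X) = diagonal X ↔ _
  rw [jonesT_eq_self_iff]
  exact ⟨hch.nonempty_homeomorph_Icc, fun ⟨e⟩ => e.jonesT_diagonal_subset⟩
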